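/- arXiv:1005.5630 — 3 statements merged into one kernel-verified Lean document; each statement's English description precedes it below -/
import Mathlib

section
/- In every execution of the Read Checking protocol under a fair scheduler with read/write atomicity, every process performs an infinite number of atomic actions; in particular every execution is infinite and every reachable configuration is deadlock-free. -/
/-!
An operational model of the Read Checking protocol of Johnen, Lavallée, Lavault.

A network is a finite-degree system of processes; each process `p` has `deg p ≥ 1`
neighbours, enumerated by `nbr p : Fin (deg p) → Proc`.  Communication is via link
registers under read/write atomicity: `Write_{AB}` and `Read_{AB}` are owned
(written) by `A` and can be read by its neighbour `B`.
-/

structure Network where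
  Proc : Type
  deg : Proc → ℕ
  deg_pos : ∀ p, 0 < deg p
  nbr : (p : Proc) → Fin (deg p) → Proc
  nbr_ne : ∀ p i, nbr p i ≠ p
  nbr_inj : ∀ p, Function.Injective (nbr p)
  nbr_symm : ∀ p i, ∃ j, nbr (nbr p i) j = p

namespace RC

open Classical

/-- Program counter of a process with `n` neighbours running the Read Checking
protocol.  `write i` : about to execute `write(Write_{AB_i}, get_i)`;
`loop i k` : inside the repeat loop, about to execute the `k`-th atomic action
(`k = 0`: `r_i ← read(Write_{B_iA})`, `k = 1`: `write(Read_{AB_i}, r_i)`,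
`k = 2`: `val_i ← read(Read_{B_iA})`, `k = 3`: `s_i ← read(Write_{AB_i})`,
followed, after the last neighbour, by the (local) exit test `∀ i, val_i = s_i`). -/
inductive PC (n : ℕ) : Type
  | write : Fin n → PC n
  | loop : Fin n → Fin 4 → PC n

/-- The link registers: `W A B` is `Write_{AB}`, `R A B` is `Read_{AB}` (both owned by `A`). -/
inductive Reg (Proc : Type) : Type
  | W : Proc → Proc → Reg Proc
  | R : Proc → Proc → Reg Proc

/-- An atomic action: a single read of one register, or a single write of a value
into one register (read/write atomicity). -/
inductive Act (Proc Val : Type) : Type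
  | read : Reg Proc → Act Proc Val
  | write : Reg Proc → Val → Act Proc Val

/-- A configuration: contents of all link registers, and local state of every
process (program counter and the local variables `r_i`, `val_i`, `s_i`). -/
structure Config (Net : Network) (Val : Type) : Type where
  regW : Net.Proc → Net.Proc → Val
  regR : Net.Proc → Net.Proc → Val
  pc : (p : Net.Proc) → PC (Net.deg p)
  rv : (p : Net.Proc) → Fin (Net.deg p) → Val
  vv : (p : Net.Proc) → Fin (Net.deg p) → Val
  sv : (p : Net.Proc) → Fin (Net.deg p) → Val

def finSucc? {n : ℕ} (i : Fin n) : Option (Fin n) :=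
  if h : i.1 + 1 < n then some ⟨i.1 + 1, h⟩ else none

noncomputable def upd2 {Proc : Type} {β : Type} (f : Proc → Proc → β) (a b : Proc) (v : β) :
    Proc → Proc → β :=
  fun x y => if x = a ∧ y = b then v else f x y

/-- One atomic step of process `p`, labelled by the action performed.
The value written by `write(Write_{AB_i}, get_i)` is arbitrary: `get_i` is an
arbitrary helper function returning the next message to be sent. -/
inductive Step (Net : Network) (Val : Type) :
    Config Net Val → Net.Proc → Act Net.Proc Val → Config Net Val → Prop
  | writeW (c : Config Net Val) (p : Net.Proc) (i : Fin (Net.deg p)) (v : Val)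
      (h : c.pc p = .write i) :
      Step Net Val c p (.write (.W p (Net.nbr p i)) v)
        { c with
          regW := upd2 c.regW p (Net.nbr p i) v
          pc := Function.update c.pc p
            (match finSucc? i with
             | some j => PC.write j
             | none => PC.loop ⟨0, Net.deg_pos p⟩ 0) }
  | readNbrW (c : Config Net Val) (p : Net.Proc) (i : Fin (Net.deg p))
      (h : c.pc p = .loop i 0) :
      Step Net Val c p (.read (.W (Net.nbr p i) p))
        { c with
          rv := Function.update c.rv p (Function.update (c.rv p) i (c.regW (Net.nbr p i) p))
          pc := Function.update c.pc p (PC.loop i 1) }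
  | writeR (c : Config Net Val) (p : Net.Proc) (i : Fin (Net.deg p))
      (h : c.pc p = .loop i 1) :
      Step Net Val c p (.write (.R p (Net.nbr p i)) (c.rv p i))
        { c with
          regR := upd2 c.regR p (Net.nbr p i) (c.rv p i)
          pc := Function.update c.pc p (PC.loop i 2) }
  | readNbrR (c : Config Net Val) (p : Net.Proc) (i : Fin (Net.deg p))
      (h : c.pc p = .loop i 2) :
      Step Net Val c p (.read (.R (Net.nbr p i) p))
        { c with
          vv := Function.update c.vv p (Function.update (c.vv p) i (c.regR (Net.nbr p i) p))
          pc := Function.update c.pc p (PC.loop i 3) }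
  | readOwnW (c : Config Net Val) (p : Net.Proc) (i : Fin (Net.deg p))
      (h : c.pc p = .loop i 3) :
      Step Net Val c p (.read (.W p (Net.nbr p i)))
        { c with
          sv := Function.update c.sv p (Function.update (c.sv p) i (c.regW p (Net.nbr p i)))
          pc := Function.update c.pc p
            (match finSucc? i with
             | some j => PC.loop j 0
             | none =>
               if ∀ j, c.vv p j = Function.update (c.sv p) i (c.regW p (Net.nbr p i)) j
               then PC.write ⟨0, Net.deg_pos p⟩
               else PC.loop ⟨0, Net.deg_pos p⟩ 0) }

/-- An execution: an infinite sequence of configurations, starting from an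
arbitrary configuration, where at each instant `t` the scheduled process
`sched t` performs the atomic action `act t`. -/
structure Exec (Net : Network) (Val : Type) : Type where
  cfg : ℕ → Config Net Val
  sched : ℕ → Net.Proc
  act : ℕ → Act Net.Proc Val
  step : ∀ t, Step Net Val (cfg t) (sched t) (act t) (cfg (t + 1))

/-- A process is enabled when it can perform an atomic step. -/
def Enabled {Net : Network} {Val : Type} (c : Config Net Val) (p : Net.Proc) : Prop :=
  ∃ a c', Step Net Val c p a c'

/-- Fair scheduler: any process that can continuously perform an action
eventually performs one. -/
def Exec.Fair {Net : Network} {Val : Type} (e : Exec Net Val) : Prop :=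
  ∀ p t, (∀ u, t ≤ u → Enabled (e.cfg u) p) → ∃ u, t ≤ u ∧ e.sched u = p

/-- The program counter of `p` is inside the repeat loop. -/
def InLoop {Net : Network} {Val : Type} (c : Config Net Val) (p : Net.Proc) : Prop :=
  ∃ i k, c.pc p = PC.loop i k

/-- `B` allows `A` to write iff `Read_{BA} = Write_{AB}`. -/
def Allows {Net : Network} {Val : Type} (c : Config Net Val) (B A : Net.Proc) : Prop :=
  c.regR B A = c.regW A B

/-- `B` is a neighbour of `A`. -/
def Neighbour (Net : Network) (A B : Net.Proc) : Prop := ∃ i, Net.nbr A i = B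

/-- At instant `t`, process `A` writes (some value) into its register `Write_{AB}`. -/
def WritesW {Net : Network} {Val : Type} (e : Exec Net Val) (A B : Net.Proc) (t : ℕ) : Prop :=
  e.sched t = A ∧ ∃ v, e.act t = Act.write (Reg.W A B) v

/-- At instant `t`, process `B` reads from the register `Write_{AB}` of its neighbour `A`. -/
def ReadsW {Net : Network} {Val : Type} (e : Exec Net Val) (A B : Net.Proc) (t : ℕ) : Prop :=
  e.sched t = B ∧ e.act t = Act.read (Reg.W A B)

end RC

open RC in
theorem RC.always_enabled {Net : Network} {Val : Type}
    (c : Config Net Val) (p : Net.Proc) : Enabled c p := by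
  rcases h : c.pc p with ⟨i⟩ | ⟨i, k⟩
  · exact ⟨_, _, Step.writeW c p i (c.regW p p) h⟩
  · rcases k with ⟨k, hk⟩
    interval_cases k
    · exact ⟨_, _, Step.readNbrW c p i h⟩
    · exact ⟨_, _, Step.writeR c p i h⟩
    · exact ⟨_, _, Step.readNbrR c p i h⟩
    · exact ⟨_, _, Step.readOwnW c p i h⟩

open RC in
/-- In every execution of the Read Checking protocol under a fair
scheduler with read/write atomicity, every process performs an infinite number of
atomic actions (every process is scheduled again after any instant); in particular
every reachable configuration is deadlock-free (every process is enabled in every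
configuration of the execution; note that executions of the model are infinite by
construction). -/
theorem read_checking_liveness (Net : Network) (Val : Type)
    (e : Exec Net Val) (hfair : e.Fair) :
    (∀ p : Net.Proc, ∀ t : ℕ, ∃ u, t ≤ u ∧ e.sched u = p) ∧
    (∀ t : ℕ, ∀ p : Net.Proc, Enabled (e.cfg t) p) := by
  refine ⟨fun p t => hfair p t (fun u _ => RC.always_enabled _ p), fun t p => RC.always_enabled _ p⟩
end

section
/- Let A be a process whose program counter is inside the repeat loop of the Read Checking protocol and let B be a neighbour of A. From any configuration, every execution eventually reaches a configuration in which either B allows A to write, or A has exited the repeat loop. -/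
/-!
While `A` stays in its repeat loop it never writes, so `Write_{AB}` is frozen. Every
process is always enabled, so fairness schedules `B` infinitely often, and since each of
its steps brings it strictly closer to the read of `Write_{AB}` in its own loop, `B`
eventually copies `Write_{AB}` into `r` and, at its very next step, `r` into `Read_{BA}`.
-/

namespace RC

open Classical

variable {Net : Network} {Val : Type}

/-- Worst-case number of atomic steps from `pc` until the process is about to read
`Write_{B_j A}`, i.e. reaches `loop j 0`; the `+ n` accounts for a full write phase. -/
def distToLoopStart {n : ℕ} (pc : PC n) (j : ℕ) : ℕ :=
  match pc with
  | .write i => (n - i.1) + 4 * j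
  | .loop i k =>
      if 4 * i.1 + k.1 ≤ 4 * j then 4 * j - (4 * i.1 + k.1)
      else (4 * n - (4 * i.1 + k.1)) + n + 4 * j

namespace Step

variable {c c' : Config Net Val} {p : Net.Proc} {a : Act Net.Proc Val}

lemma pc_of_ne (h : Step Net Val c p a c') {q : Net.Proc} (hq : q ≠ p) :
    c'.pc q = c.pc q := by
  cases h <;> simp [Function.update_of_ne hq]

lemma rv_of_ne (h : Step Net Val c p a c') {q : Net.Proc} (hq : q ≠ p) :
    c'.rv q = c.rv q := by
  cases h <;> simp [Function.update_of_ne hq]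

lemma regW_of_pc_ne_write (h : Step Net Val c p a c') {x : Net.Proc}
    (hx : ∀ i, c.pc x ≠ .write i) (y : Net.Proc) : c'.regW x y = c.regW x y := by
  cases h with
  | writeW i v hpc =>
    simp only [upd2]
    split_ifs with hxy
    · obtain ⟨rfl, -⟩ := hxy
      exact absurd hpc (hx i)
    · rfl
  | _ => rfl

lemma distToLoopStart_lt (h : Step Net Val c p a c') {j : Fin (Net.deg p)}
    (hne : c.pc p ≠ .loop j 0) :
    distToLoopStart (c'.pc p) j.1 < distToLoopStart (c.pc p) j.1 := by
  cases h with
  | writeW i _ hpc | readNbrW i hpc | writeR i hpc | readNbrR i hpc | readOwnW i hpc =>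
    simp only [hpc, Function.update_self, finSucc?, distToLoopStart] at hne ⊢
    grind

lemma of_pc_eq_loop_zero (h : Step Net Val c p a c') {i : Fin (Net.deg p)}
    (hpc : c.pc p = .loop i 0) :
    c'.pc p = .loop i 1 ∧ c'.rv p i = c.regW (Net.nbr p i) p := by
  cases h <;> simp_all

lemma regR_of_pc_eq_loop_one (h : Step Net Val c p a c') {i : Fin (Net.deg p)}
    (hpc : c.pc p = .loop i 1) : c'.regR p (Net.nbr p i) = c.rv p i := by
  cases h <;> simp_all [upd2]

end Step

lemma enabled (c : Config Net Val) (p : Net.Proc) : Enabled c p := by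
  rcases hpc : c.pc p with i | ⟨i, k⟩
  · exact ⟨_, _, .writeW c p i (c.regW p p) hpc⟩
  · match k, hpc with
    | 0, hpc => exact ⟨_, _, .readNbrW c p i hpc⟩
    | 1, hpc => exact ⟨_, _, .writeR c p i hpc⟩
    | 2, hpc => exact ⟨_, _, .readNbrR c p i hpc⟩
    | 3, hpc => exact ⟨_, _, .readOwnW c p i hpc⟩

namespace Exec

variable (e : Exec Net Val)

lemma pc_rv_eq_of_not_sched {p : Net.Proc} {s u : ℕ} (hsu : s ≤ u)
    (h : ∀ v, s ≤ v → v < u → e.sched v ≠ p) :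
    (e.cfg u).pc p = (e.cfg s).pc p ∧ (e.cfg u).rv p = (e.cfg s).rv p := by
  induction u, hsu using Nat.le_induction with
  | base => exact ⟨rfl, rfl⟩
  | succ u hsu ih =>
    have hp : p ≠ e.sched u := fun hp => h u hsu u.lt_succ_self hp.symm
    obtain ⟨hpc, hrv⟩ := ih fun v hsv hvu => h v hsv (hvu.trans u.lt_succ_self)
    exact ⟨((e.step u).pc_of_ne hp).trans hpc, ((e.step u).rv_of_ne hp).trans hrv⟩

lemma regW_eq_of_inLoop {A : Net.Proc} {s u : ℕ} (hsu : s ≤ u)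
    (hloop : ∀ v, s ≤ v → InLoop (e.cfg v) A) (B : Net.Proc) :
    (e.cfg u).regW A B = (e.cfg s).regW A B := by
  induction u, hsu using Nat.le_induction with
  | base => rfl
  | succ u hsu ih =>
    obtain ⟨i, k, hpc⟩ := hloop u hsu
    exact ((e.step u).regW_of_pc_ne_write (by simp [hpc]) B).trans ih

variable {e}

lemma Fair.exists_sched_ge (hfair : e.Fair) (p : Net.Proc) (s : ℕ) :
    ∃ u, s ≤ u ∧ e.sched u = p :=
  hfair p s fun u _ => enabled (e.cfg u) p

lemma Fair.exists_next_sched (hfair : e.Fair) (p : Net.Proc) (s : ℕ) :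
    ∃ u, s ≤ u ∧ e.sched u = p ∧
      (e.cfg u).pc p = (e.cfg s).pc p ∧ (e.cfg u).rv p = (e.cfg s).rv p := by
  have hex := hfair.exists_sched_ge p s
  obtain ⟨hsu, hp⟩ := Nat.find_spec hex
  exact ⟨_, hsu, hp, e.pc_rv_eq_of_not_sched hsu
    fun v hsv hvu hv => Nat.find_min hex hvu ⟨hsv, hv⟩⟩

lemma Fair.exists_sched_of_pc_eq_loop_zero (hfair : e.Fair) (p : Net.Proc)
    (j : Fin (Net.deg p)) (s : ℕ) :
    ∃ u, s ≤ u ∧ e.sched u = p ∧ (e.cfg u).pc p = .loop j 0 := by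
  obtain ⟨u, hsu, hp⟩ := hfair.exists_sched_ge p s
  induction hd : distToLoopStart ((e.cfg u).pc p) j using Nat.strong_induction_on
    generalizing u with
  | _ d ih =>
    by_cases hpc : (e.cfg u).pc p = .loop j 0
    · exact ⟨u, hsu, hp, hpc⟩
    have hlt := (hp ▸ e.step u).distToLoopStart_lt hpc
    obtain ⟨w, huw, hw, hpcw, -⟩ := hfair.exists_next_sched p (u + 1)
    exact ih _ (hd ▸ hpcw ▸ hlt) w (by omega) hw rfl

lemma Fair.exists_regR_eq_regW_before (hfair : e.Fair) (p : Net.Proc)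
    (j : Fin (Net.deg p)) (s : ℕ) :
    ∃ u₁ u₂, s ≤ u₁ ∧ u₁ < u₂ ∧
      (e.cfg u₂).regR p (Net.nbr p j) = (e.cfg u₁).regW (Net.nbr p j) p := by
  obtain ⟨u₁, hsu₁, hp₁, hpc₁⟩ := hfair.exists_sched_of_pc_eq_loop_zero p j s
  obtain ⟨hpc₁', hrv₁⟩ := (hp₁ ▸ e.step u₁).of_pc_eq_loop_zero hpc₁
  obtain ⟨u₂, hu₁₂, hp₂, hpc₂, hrv₂⟩ := hfair.exists_next_sched p (u₁ + 1)
  have hwrite : (e.cfg (u₂ + 1)).regR p (Net.nbr p j) = (e.cfg u₂).rv p j :=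
    (hp₂ ▸ e.step u₂).regR_of_pc_eq_loop_one (hpc₂.trans hpc₁')
  exact ⟨u₁, u₂ + 1, hsu₁, by omega, by rw [hwrite, hrv₂, hrv₁]⟩

end Exec

end RC

open RC in
theorem read_checking_eventually_allowed_or_exit_general (Net : Network) (Val : Type)
    (e : Exec Net Val) (hfair : e.Fair) (A B : Net.Proc) (hAB : Neighbour Net A B)
    (t : ℕ) :
    ∃ u, t ≤ u ∧ (Allows (e.cfg u) B A ∨ ¬ InLoop (e.cfg u) A) := by
  by_contra! hcon
  obtain ⟨i, rfl⟩ := hAB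
  obtain ⟨j, hj⟩ := Net.nbr_symm A i
  obtain ⟨u₁, u₂, htu₁, hu₁₂, hcopy⟩ := hfair.exists_regR_eq_regW_before (Net.nbr A i) j t
  rw [hj] at hcopy
  have hW : ∀ u, t ≤ u → (e.cfg u).regW A (Net.nbr A i) = (e.cfg t).regW A (Net.nbr A i) :=
    fun u htu => e.regW_eq_of_inLoop htu (fun v htv => (hcon v htv).2) _
  exact (hcon u₂ (by omega)).1 (hcopy.trans ((hW u₁ htu₁).trans (hW u₂ (by omega)).symm))

open RC in
/-- Let `A` be a process whose program counter is inside the repeat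
loop of the Read Checking protocol and let `B` be a neighbour of `A`.  From any
configuration, every (fair) execution eventually reaches a configuration in which
either `B` allows `A` to write (`Read_{BA} = Write_{AB}`), or `A` has exited the
repeat loop. -/
theorem read_checking_eventually_allowed_or_exit (Net : Network) (Val : Type)
    (e : Exec Net Val) (hfair : e.Fair) (A B : Net.Proc) (hAB : Neighbour Net A B)
    (t : ℕ) (hloop : InLoop (e.cfg t) A) :
    ∃ u, t ≤ u ∧ (Allows (e.cfg u) B A ∨ ¬ InLoop (e.cfg u) A) :=
  read_checking_eventually_allowed_or_exit_general Net Val e hfair A B hAB t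
end

section
/- In any execution of the Read Checking protocol, after a process has executed its first atomic action it never performs a wrong writing; consequently each process performs at most one wrong writing in the whole execution, which can only occur if its program counter is initially positioned after the read from a Write register and before the write into the corresponding Read register. -/
namespace RC

/-- At instant `t`, process `B` writes (some value) into its register `Read_{BA}`. -/
def WritesR {Net : Network} {Val : Type} (e : Exec Net Val) (B A : Net.Proc) (t : ℕ) : Prop :=
  e.sched t = B ∧ ∃ v, e.act t = Act.write (Reg.R B A) v

/-- The write of `B` into `Read_{BA}` at instant `t` is performed within the context
of an update of the register `Read_{BA}`, i.e. it is immediately preceded (among the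
actions of `B`) by the read `r ← read(Write_{AB})`, and it writes the value that was
read. -/
def WithinUpdate {Net : Network} {Val : Type} (e : Exec Net Val) (B A : Net.Proc) (t : ℕ) :
    Prop :=
  ∃ t0, t0 < t ∧ e.sched t0 = B ∧ e.act t0 = Act.read (Reg.W A B) ∧
    (∀ u, t0 < u → u < t → e.sched u ≠ B) ∧
    e.act t = Act.write (Reg.R B A) ((e.cfg t0).regW A B)

/-- At instant `t`, process `B` performs a wrong writing: a write into one of its
`Read` registers which is not performed within the context of an update. -/
def WrongWriting {Net : Network} {Val : Type} (e : Exec Net Val) (B : Net.Proc) (t : ℕ) :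
    Prop :=
  ∃ A, WritesR e B A t ∧ ¬ WithinUpdate e B A t

end RC

namespace RC

/-- Frame lemma: a step of `p ≠ B` does not change the local state of `B`. -/
theorem Step.frame {Net : Network} {Val : Type} {c : Config Net Val} {p : Net.Proc}
    {a : Act Net.Proc Val} {c' : Config Net Val} (h : Step Net Val c p a c')
    (B : Net.Proc) (hne : B ≠ p) : c'.pc B = c.pc B ∧ c'.rv B = c.rv B := by
  cases h <;> simp [Function.update, hne]

/-- If `B` does not act on `[t, u)`, its local state is unchanged. -/
theorem noact {Net : Network} {Val : Type} (e : Exec Net Val) (B : Net.Proc)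
    (t u : ℕ) (htu : t ≤ u) (hn : ∀ s, t ≤ s → s < u → e.sched s ≠ B) :
    (e.cfg u).pc B = (e.cfg t).pc B ∧ (e.cfg u).rv B = (e.cfg t).rv B := by
  induction u with
  | zero =>
    have : t = 0 := Nat.le_zero.mp htu
    simp [this]
  | succ u ih =>
    rcases Nat.lt_or_ge t (u + 1) with hlt | hge
    · have ht : t ≤ u := Nat.lt_succ_iff.mp hlt
      have ih' := ih ht (fun s hs hsu => hn s hs (Nat.lt_succ_of_lt hsu))
      have hs : e.sched u ≠ B := hn u ht (Nat.lt_succ_self u)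
      have hf := (e.step u).frame B (fun h => hs h.symm)
      exact ⟨hf.1.trans ih'.1, hf.2.trans ih'.2⟩
    · have : t = u + 1 := le_antisymm htu hge
      simp [this]

/-- Inversion: a write into `Read_{pA}` happens with program counter
`loop i 1`, `A = nbr p i`, and writes the current value of `rv p i`. -/
theorem step_writeR_inv {Net : Network} {Val : Type} {c : Config Net Val} {p : Net.Proc}
    {a : Act Net.Proc Val} {c' : Config Net Val} (h : Step Net Val c p a c')
    {A : Net.Proc} {v : Val} (ha : a = Act.write (Reg.R p A) v) :
    ∃ i : Fin (Net.deg p), Net.nbr p i = A ∧ c.pc p = PC.loop i 1 ∧ v = c.rv p i := by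
  cases h with
  | writeW i w hp => simp_all
  | readNbrW i hp => simp_all
  | writeR i hp =>
    obtain ⟨h1, h2⟩ := (by simpa using ha : Net.nbr p i = A ∧ c.rv p i = v)
    exact ⟨i, h1, hp, h2.symm⟩
  | readNbrR i hp => simp_all
  | readOwnW i hp => simp_all

/-- Inversion: if a step of `p` leaves it at `loop i 1`, that step was the read
`r_i ← read(Write_{B_i p})` and it stored the read value into `rv p i`. -/
theorem step_to_loop1_inv {Net : Network} {Val : Type} {c : Config Net Val} {p : Net.Proc}
    {a : Act Net.Proc Val} {c' : Config Net Val} (h : Step Net Val c p a c')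
    {i : Fin (Net.deg p)} (hp : c'.pc p = PC.loop i 1) :
    a = Act.read (Reg.W (Net.nbr p i) p) ∧ c'.rv p i = c.regW (Net.nbr p i) p := by
  cases h with
  | writeW j w hj =>
    exfalso
    rcases hfs : finSucc? j with _ | j' <;> simp_all
  | readNbrW j hj =>
    simp only [Function.update_self] at hp
    have h1 : j = i := by simpa using hp
    subst h1
    simp
  | writeR j hj => simp_all
  | readNbrR j hj => simp_all
  | readOwnW j hj =>
    exfalso
    rcases hfs : finSucc? j with _ | j' <;> split_ifs at * <;> simp_all

end RC

open RC in
/-- In any execution of the Read Checking protocol, after a process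
has executed its first atomic action it never performs a wrong writing; consequently
each process performs at most one wrong writing in the whole execution, which can
only occur at the first action of the process, when its program counter is initially
positioned after the read from a `Write` register and before the write into the
corresponding `Read` register. -/
theorem read_checking_no_wrong_writing (Net : Network) (Val : Type) (e : Exec Net Val) :
    (∀ B : Net.Proc, ∀ t : ℕ, (∃ u, u < t ∧ e.sched u = B) → ¬ WrongWriting e B t) ∧
    (∀ B : Net.Proc, ∀ t t' : ℕ, WrongWriting e B t → WrongWriting e B t' → t = t') ∧
    (∀ B : Net.Proc, ∀ t : ℕ, WrongWriting e B t →
      (∀ u, u < t → e.sched u ≠ B) ∧ ∃ i, (e.cfg 0).pc B = PC.loop i 1) := by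
  have main : ∀ B : Net.Proc, ∀ t : ℕ, (∃ u, u < t ∧ e.sched u = B) →
      ¬ WrongWriting e B t := by
    intro B t ⟨u, hut, hus⟩ ⟨A, ⟨hsB, v, hact⟩, hnot⟩
    apply hnot
    -- invert the step at `t`
    have hstt := e.step t
    rw [hsB] at hstt
    obtain ⟨i, hiA, hpct, hv⟩ := step_writeR_inv hstt hact
    -- the latest action of `B` before `t`
    classical
    set P : ℕ → Prop := fun s => e.sched s = B with hP
    have hPu : P u := hus
    set t0 := Nat.findGreatest P (t - 1) with ht0
    have hut1 : u ≤ t - 1 := Nat.le_sub_one_of_lt hut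
    have hPt0 : P t0 := Nat.findGreatest_spec hut1 hPu
    have ht0le : t0 ≤ t - 1 := Nat.findGreatest_le _
    have ht0t : t0 < t := lt_of_le_of_lt ht0le (Nat.sub_lt (Nat.pos_of_ne_zero (by omega)) one_pos)
    have hmax : ∀ s, t0 < s → s < t → e.sched s ≠ B := by
      intro s hs1 hs2
      exact Nat.findGreatest_is_greatest hs1 (Nat.le_sub_one_of_lt hs2)
    -- `B`'s state is unchanged on `(t0, t]`
    have hnc := noact e B (t0 + 1) t ht0t (fun s hs1 hs2 => hmax s (Nat.lt_of_succ_le hs1) hs2)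
    have hpc1 : (e.cfg (t0 + 1)).pc B = PC.loop i 1 := hnc.1.symm.trans hpct
    have hst0 := e.step t0
    rw [hPt0] at hst0
    obtain ⟨hact0, hrv0⟩ := step_to_loop1_inv hst0 hpc1
    refine ⟨t0, ht0t, hPt0, by rw [hact0, hiA], hmax, ?_⟩
    rw [hact, hv]
    have : (e.cfg t).rv B i = (e.cfg t0).regW (Net.nbr B i) B := by
      rw [hnc.2, hrv0]
    rw [this, hiA]
  have third : ∀ B : Net.Proc, ∀ t : ℕ, WrongWriting e B t →
      (∀ u, u < t → e.sched u ≠ B) ∧ ∃ i, (e.cfg 0).pc B = PC.loop i 1 := by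
    intro B t hw
    have hno : ∀ u, u < t → e.sched u ≠ B := by
      intro u hu hus
      exact main B t ⟨u, hu, hus⟩ hw
    refine ⟨hno, ?_⟩
    obtain ⟨A, ⟨hsB, v, hact⟩, -⟩ := hw
    have hstt := e.step t
    rw [hsB] at hstt
    obtain ⟨i, -, hpct, -⟩ := step_writeR_inv hstt hact
    have hnc := noact e B 0 t (Nat.zero_le t) (fun s _ hs => hno s hs)
    exact ⟨i, hnc.1.symm.trans hpct⟩
  refine ⟨main, ?_, third⟩
  intro B t t' hw hw'
  by_contra hne
  rcases Nat.lt_or_ge t t' with h | h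
  · exact (third B t' hw').1 t h hw.choose_spec.1.1
  · have h' : t' < t := lt_of_le_of_ne h (fun eq => hne eq.symm)
    exact (third B t hw).1 t' h' hw'.choose_spec.1.1
end
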